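/- arXiv:2210.05316 — 4 statements merged into one kernel-verified Lean document; each statement's English description precedes it below -/
import Mathlib

section
/- For fixed 0 < α < 1, the function γ ↦ ln((1-γ)/α) / ln((1-α)/γ) is monotonically increasing on the set {γ : 0 < γ < 1, γ ≠ 1-α}. -/
/-!
Write `K = u / v` with `u = log ((1 - γ) / α)` and `v = log ((1 - α) / γ)`. Off `γ = 1 - α`,
`K' = ((1 - γ) u - γ v) / (γ (1 - γ) v²)`, and the numerator is nonnegative by Gibbs' inequality
for the two-point distributions `(γ, 1 - γ)` and `(1 - α, α)`, so `K` increases on each side of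
`1 - α`. Across `1 - α` the other instance of Gibbs' inequality, `α u ≤ (1 - α) v`, shows that
`K ≤ (1 - α) / α` where `v > 0` and `K ≥ (1 - α) / α` where `v < 0`.
-/

open Real Set

/-- Gibbs' inequality for two-point distributions. -/
lemma mul_log_div_le_one_sub_mul_log_div {p q : ℝ} (hp0 : 0 < p) (hp1 : p < 1)
    (hq0 : 0 < q) (hq1 : q < 1) :
    p * log (q / p) ≤ (1 - p) * log ((1 - p) / (1 - q)) := by
  have hp1' : 0 < 1 - p := by linarith
  have hq1' : 0 < 1 - q := by linarith
  calc p * log (q / p) ≤ p * (q / p - 1) :=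
        mul_le_mul_of_nonneg_left (log_le_sub_one_of_pos (div_pos hq0 hp0)) hp0.le
    _ = (1 - p) * (1 - ((1 - p) / (1 - q))⁻¹) := by field_simp; ring
    _ ≤ (1 - p) * log ((1 - p) / (1 - q)) :=
        mul_le_mul_of_nonneg_left (one_sub_inv_le_log_of_pos (div_pos hp1' hq1')) hp1'.le

noncomputable def kAlpha (α γ : ℝ) : ℝ := log ((1 - γ) / α) / log ((1 - α) / γ)

section kAlpha

variable {α γ : ℝ}

lemma log_one_sub_div_ne_zero (hα1 : α < 1) (hγ0 : 0 < γ) (hγ : γ ≠ 1 - α) :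
    log ((1 - α) / γ) ≠ 0 :=
  log_ne_zero_of_pos_of_ne_one (div_pos (by linarith) hγ0)
    (fun h ↦ hγ ((div_eq_one_iff_eq hγ0.ne').mp h).symm)

lemma hasDerivAt_kAlpha (hα0 : α ≠ 0) (hγ0 : γ ≠ 0) (hγ1 : γ ≠ 1)
    (hv : log ((1 - α) / γ) ≠ 0) :
    HasDerivAt (kAlpha α)
      (((1 - γ) * log ((1 - γ) / α) - γ * log ((1 - α) / γ)) /
        (γ * (1 - γ) * log ((1 - α) / γ) ^ 2)) γ := by
  have hγ1' : 1 - γ ≠ 0 := sub_ne_zero.2 hγ1.symm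
  have hq : (1 - α) / γ ≠ 0 := fun h ↦ hv (by rw [h, log_zero])
  have hα1 : 1 - α ≠ 0 := (div_ne_zero_iff.mp hq).1
  have hu : HasDerivAt (fun x ↦ log ((1 - x) / α)) (-(1 - γ)⁻¹) γ := by
    convert (((hasDerivAt_id' γ).const_sub 1).div_const α).log (div_ne_zero hγ1' hα0) using 1
    field_simp
  have hv' : HasDerivAt (fun x ↦ log ((1 - α) / x)) (-γ⁻¹) γ := by
    have h := ((hasDerivAt_inv hγ0).const_mul (1 - α)).log (by rwa [← div_eq_mul_inv])
    simp only [← div_eq_mul_inv] at h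
    convert h using 1
    field_simp
  exact (hu.div hv' hv).congr_deriv (by field_simp; ring)

lemma monotoneOn_kAlpha (hα0 : 0 < α) (hα1 : α < 1) {s : Set ℝ} (hs : Convex ℝ s)
    (hs01 : s ⊆ Ioo 0 1) (hsα : 1 - α ∉ s) : MonotoneOn (kAlpha α) s := by
  have hderiv (γ : ℝ) (hγ : γ ∈ s) := hasDerivAt_kAlpha hα0.ne' (hs01 hγ).1.ne' (hs01 hγ).2.ne
    (log_one_sub_div_ne_zero hα1 (hs01 hγ).1 (ne_of_mem_of_not_mem hγ hsα))
  refine monotoneOn_of_hasDerivWithinAt_nonneg hs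
    (fun γ hγ ↦ (hderiv γ hγ).continuousAt.continuousWithinAt)
    (fun γ hγ ↦ (hderiv γ (interior_subset hγ)).hasDerivWithinAt) fun γ hγ ↦ ?_
  obtain ⟨hγ0, hγ1⟩ := hs01 (interior_subset hγ)
  have gibbs := mul_log_div_le_one_sub_mul_log_div hγ0 hγ1 (sub_pos.2 hα1) (sub_lt_self 1 hα0)
  rw [sub_sub_cancel] at gibbs
  exact div_nonneg (by linarith) (by positivity)

lemma mul_log_le_one_sub_mul_log (hα0 : 0 < α) (hα1 : α < 1) (hγ0 : 0 < γ) (hγ1 : γ < 1) :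
    α * log ((1 - γ) / α) ≤ (1 - α) * log ((1 - α) / γ) := by
  have gibbs := mul_log_div_le_one_sub_mul_log_div hα0 hα1 (sub_pos.2 hγ1) (sub_lt_self 1 hγ0)
  rwa [sub_sub_cancel] at gibbs

lemma kAlpha_le_of_lt_one_sub (hα0 : 0 < α) (hγ0 : 0 < γ) (hγ : γ < 1 - α) :
    kAlpha α γ ≤ (1 - α) / α := by
  have hv : 0 < log ((1 - α) / γ) := log_pos ((one_lt_div hγ0).2 hγ)
  have := mul_log_le_one_sub_mul_log hα0 (by linarith) hγ0 (by linarith)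
  rw [kAlpha, div_le_div_iff₀ hv hα0]
  linarith

lemma le_kAlpha_of_one_sub_lt (hα0 : 0 < α) (hα1 : α < 1) (hγ : 1 - α < γ) (hγ1 : γ < 1) :
    (1 - α) / α ≤ kAlpha α γ := by
  have hγ0 : 0 < γ := by linarith
  have hv : log ((1 - α) / γ) < 0 := log_neg (div_pos (by linarith) hγ0) ((div_lt_one hγ0).2 hγ)
  have := mul_log_le_one_sub_mul_log hα0 hα1 hγ0 hγ1
  rw [kAlpha, le_div_iff_of_neg hv, div_mul_eq_mul_div, le_div_iff₀ hα0]
  linarith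

end kAlpha

theorem K_alpha_mono_in_gamma (α : ℝ) (hα0 : 0 < α) (hα1 : α < 1) :
    ∀ γ₁ γ₂ : ℝ, 0 < γ₁ → γ₁ < 1 → γ₁ ≠ 1 - α → 0 < γ₂ → γ₂ < 1 → γ₂ ≠ 1 - α →
      γ₁ < γ₂ →
      Real.log ((1 - γ₁) / α) / Real.log ((1 - α) / γ₁) ≤
        Real.log ((1 - γ₂) / α) / Real.log ((1 - α) / γ₂) := by
  intro γ₁ γ₂ h₁0 h₁1 h₁α h₂0 h₂1 h₂α h₁₂
  change kAlpha α γ₁ ≤ kAlpha α γ₂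
  rcases h₂α.lt_or_gt with h₂ | h₂
  · exact monotoneOn_kAlpha hα0 hα1 (convex_Ioo 0 (1 - α)) (Ioo_subset_Ioo_right (by linarith))
      right_notMem_Ioo ⟨h₁0, h₁₂.trans h₂⟩ ⟨h₂0, h₂⟩ h₁₂.le
  rcases h₁α.lt_or_gt with h₁ | h₁
  · exact (kAlpha_le_of_lt_one_sub hα0 h₁0 h₁).trans (le_kAlpha_of_one_sub_lt hα0 hα1 h₂ h₂1)
  · exact monotoneOn_kAlpha hα0 hα1 (convex_Ioo (1 - α) 1) (Ioo_subset_Ioo_left (by linarith))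
      left_notMem_Ioo ⟨h₁, h₁1⟩ ⟨h₁.trans h₁₂, h₂1⟩ h₁₂.le
end

section
/- For all α, γ ∈ (0,1), (1-γ)^{1/γ} · γ^{1/(1-γ)} ≥ α^{1/γ} · (1-α)^{1/(1-γ)}, with equality if and only if α = 1 - γ. -/
theorem rpow_product_inequality (α γ : ℝ) (hα0 : 0 < α) (hα1 : α < 1)
    (hγ0 : 0 < γ) (hγ1 : γ < 1) :
    α ^ (1 / γ) * (1 - α) ^ (1 / (1 - γ)) ≤ (1 - γ) ^ (1 / γ) * γ ^ (1 / (1 - γ)) ∧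
    (α ^ (1 / γ) * (1 - α) ^ (1 / (1 - γ)) = (1 - γ) ^ (1 / γ) * γ ^ (1 / (1 - γ)) ↔
      α = 1 - γ) := by
  have h1γ : 0 < 1 - γ := by linarith
  have h1α : 0 < 1 - α := by linarith
  set a := 1 / γ with ha
  set b := 1 / (1 - γ) with hb
  have ha0 : 0 < a := by positivity
  have hb0 : 0 < b := by positivity
  have key : α ≠ 1 - γ → α ^ a * (1 - α) ^ b < (1 - γ) ^ a * γ ^ b := by
    intro hne
    have hx : (0:ℝ) < α / (1 - γ) := by positivity
    have hy : (0:ℝ) < (1 - α) / γ := by positivity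
    have hx1 : α / (1 - γ) ≠ 1 := by
      intro h
      apply hne
      field_simp at h
      linarith
    have h1 : Real.log (α / (1 - γ)) < α / (1 - γ) - 1 :=
      Real.log_lt_sub_one_of_pos hx hx1
    have h2 : Real.log ((1 - α) / γ) ≤ (1 - α) / γ - 1 :=
      Real.log_le_sub_one_of_pos hy
    have e : a * (α / (1 - γ) - 1) + b * ((1 - α) / γ - 1) = 0 := by
      rw [ha, hb]
      field_simp
      ring
    have hsum : a * Real.log (α / (1 - γ)) + b * Real.log ((1 - α) / γ) < 0 := by
      nlinarith [mul_lt_mul_of_pos_left h1 ha0, mul_le_mul_of_nonneg_left h2 hb0.le]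
    have hlog : a * Real.log α + b * Real.log (1 - α) <
        a * Real.log (1 - γ) + b * Real.log γ := by
      rw [Real.log_div (ne_of_gt hα0) (ne_of_gt h1γ),
          Real.log_div (ne_of_gt h1α) (ne_of_gt hγ0)] at hsum
      nlinarith
    calc α ^ a * (1 - α) ^ b
        = Real.exp (a * Real.log α + b * Real.log (1 - α)) := by
          rw [Real.exp_add, Real.rpow_def_of_pos hα0, Real.rpow_def_of_pos h1α,
            mul_comm (Real.log α), mul_comm (Real.log (1 - α))]
      _ < Real.exp (a * Real.log (1 - γ) + b * Real.log γ) := Real.exp_lt_exp.mpr hlog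
      _ = (1 - γ) ^ a * γ ^ b := by
          rw [Real.exp_add, Real.rpow_def_of_pos h1γ, Real.rpow_def_of_pos hγ0,
            mul_comm (Real.log (1 - γ)), mul_comm (Real.log γ)]
  have heq : α = 1 - γ → α ^ a * (1 - α) ^ b = (1 - γ) ^ a * γ ^ b := by
    intro h
    rw [h, show (1:ℝ) - (1 - γ) = γ by ring]
  refine ⟨?_, ?_, heq⟩
  · by_cases h : α = 1 - γ
    · exact (heq h).le
    · exact (key h).le
  · intro he
    by_contra h
    exact absurd he (ne_of_lt (key h))
end

section
/- For fixed γ ∈ (0,1), the function α ↦ ln((1-γ)/α) / ln((1-α)/γ) is monotonically decreasing on {α ∈ (0,1) : α ≠ 1-γ}. -/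
/-!
With `w v = log (1 - exp (-v))` we have `w (-log p) = log (1 - p)`, so the quotient at `α` is the
slope of the secant of `w` between `-log γ` and `-log (1 - α)`. As `w` is concave, this slope is
antitone in the moving endpoint on both sides of the fixed one, and `α ↦ -log (1 - α)` increases.
-/

open Real Set

lemma ConcaveOn.log {E : Type*} [AddCommGroup E] [Module ℝ E] {s : Set E} {g : E → ℝ}
    (hg : ConcaveOn ℝ s g) (hpos : ∀ x ∈ s, 0 < g x) :
    ConcaveOn ℝ s fun x => Real.log (g x) := by
  refine ⟨hg.1, fun x hx y hy a b ha hb hab => ?_⟩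
  calc a • Real.log (g x) + b • Real.log (g y) ≤ Real.log (a • g x + b • g y) :=
        strictConcaveOn_log_Ioi.concaveOn.2 (hpos x hx) (hpos y hy) ha hb hab
    _ ≤ Real.log (g (a • x + b • y)) :=
        log_le_log (convex_Ioi (0 : ℝ) (hpos x hx) (hpos y hy) ha hb hab)
          (hg.2 hx hy ha hb hab)

lemma concaveOn_log_one_sub_exp_neg : ConcaveOn ℝ (Ioi 0) fun v => log (1 - exp (-v)) := by
  have hexp : ConvexOn ℝ (Ioi 0) fun v : ℝ => exp (-v) :=
    (convexOn_exp.comp_linearMap (-LinearMap.id)).subset (subset_univ _) (convex_Ioi 0)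
  have hsub : ConcaveOn ℝ (Ioi 0) fun v : ℝ => 1 - exp (-v) :=
    (concaveOn_const 1 (convex_Ioi 0)).sub hexp
  exact hsub.log fun v hv => sub_pos.2 (exp_lt_one_iff.2 (neg_neg_of_pos hv))

lemma log_one_sub_exp_neg_neg_log {p : ℝ} (hp : 0 < p) :
    log (1 - exp (-(-log p))) = log (1 - p) := by
  rw [neg_neg, exp_log hp]

lemma log_div_log_eq_slope {γ α : ℝ} (hγ0 : 0 < γ) (hγ1 : γ < 1) (hα0 : 0 < α) (hα1 : α < 1) :
    log ((1 - γ) / α) / log ((1 - α) / γ) =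
      slope (fun v => log (1 - exp (-v))) (-log γ) (-log (1 - α)) := by
  have h1α : 0 < 1 - α := by linarith
  rw [slope_def_field, log_one_sub_exp_neg_neg_log hγ0, log_one_sub_exp_neg_neg_log h1α,
    sub_sub_cancel, log_div h1α.ne' hγ0.ne', log_div (by linarith) hα0.ne', ← neg_div_neg_eq]
  congr 1 <;> ring

theorem K_alpha_anti_in_alpha (γ : ℝ) (hγ0 : 0 < γ) (hγ1 : γ < 1) :
    ∀ α₁ α₂ : ℝ, 0 < α₁ → α₁ < 1 → α₁ ≠ 1 - γ → 0 < α₂ → α₂ < 1 → α₂ ≠ 1 - γ →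
      α₁ < α₂ →
      Real.log ((1 - γ) / α₂) / Real.log ((1 - α₂) / γ) ≤
        Real.log ((1 - γ) / α₁) / Real.log ((1 - α₁) / γ) := by
  intro α₁ α₂ h₁0 h₁1 h₁γ h₂0 h₂1 h₂γ h₁₂
  have hmem : ∀ α, 0 < α → α < 1 → α ≠ 1 - γ → -log (1 - α) ∈ Ioi 0 \ {-log γ} := by
    intro α hα0 hα1 hαγ
    refine ⟨neg_pos.2 (log_neg (by linarith) (by linarith)), fun h => hαγ ?_⟩
    have := log_injOn_pos (mem_Ioi.2 (by linarith : (0:ℝ) < 1 - α)) (mem_Ioi.2 hγ0)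
      (neg_inj.1 h)
    linarith
  rw [log_div_log_eq_slope hγ0 hγ1 h₁0 h₁1, log_div_log_eq_slope hγ0 hγ1 h₂0 h₂1]
  refine concaveOn_log_one_sub_exp_neg.slope_anti (neg_pos.2 (log_neg hγ0 hγ1))
    (hmem α₁ h₁0 h₁1 h₁γ) (hmem α₂ h₂0 h₂1 h₂γ) ?_
  exact neg_le_neg (log_le_log (by linarith) (by linarith))
end

section
/- Let α, β, γ ∈ (0,1) with (1-α)(1-β) < γ and γ ≠ 1-α. Define K_α = ln((1-γ)/α)/ln((1-α)/γ) and K_β = (ln(γ-(1-α)(1-β)) − ln(βγ))/(ln γ − ln(1-α)). If β + γ < 1 then K_α < K_β, and if β + γ > 1 then K_α > K_β. -/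
theorem K_alpha_K_beta_comparison (α β γ : ℝ) (hα0 : 0 < α) (hα1 : α < 1)
    (hβ0 : 0 < β) (hβ1 : β < 1) (hγ0 : 0 < γ) (hγ1 : γ < 1)
    (hcon : (1 - α) * (1 - β) < γ) (hne : γ ≠ 1 - α) :
    (β + γ < 1 →
      Real.log ((1 - γ) / α) / Real.log ((1 - α) / γ) <
        (Real.log (γ - (1 - α) * (1 - β)) - Real.log (β * γ)) /
          (Real.log γ - Real.log (1 - α))) ∧
    (1 < β + γ →
      (Real.log (γ - (1 - α) * (1 - β)) - Real.log (β * γ)) /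
          (Real.log γ - Real.log (1 - α)) <
        Real.log ((1 - γ) / α) / Real.log ((1 - α) / γ)) := by
  have h1α : 0 < 1 - α := by linarith
  have h1γ : 0 < 1 - γ := by linarith
  have hX : 0 < γ - (1 - α) * (1 - β) := by linarith
  have hβγ : 0 < β * γ := mul_pos hβ0 hγ0
  have e3 : Real.log ((1 - γ) / α) / Real.log ((1 - α) / γ)
      = (Real.log α - Real.log (1 - γ)) / (Real.log γ - Real.log (1 - α)) := by
    rw [Real.log_div (ne_of_gt h1γ) (ne_of_gt hα0),
      Real.log_div (ne_of_gt h1α) (ne_of_gt hγ0),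
      show Real.log (1 - γ) - Real.log α = -(Real.log α - Real.log (1 - γ)) by ring,
      show Real.log (1 - α) - Real.log γ = -(Real.log γ - Real.log (1 - α)) by ring,
      neg_div_neg_eq]
  have elog1 : Real.log (α * (β * γ)) = Real.log α + Real.log (β * γ) :=
    Real.log_mul (ne_of_gt hα0) (ne_of_gt hβγ)
  have elog2 : Real.log ((γ - (1 - α) * (1 - β)) * (1 - γ))
      = Real.log (γ - (1 - α) * (1 - β)) + Real.log (1 - γ) :=
    Real.log_mul (ne_of_gt hX) (ne_of_gt h1γ)
  rw [e3]
  constructor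
  · intro hbg
    rcases lt_or_gt_of_ne hne with h | h
    · have hD : Real.log γ - Real.log (1 - α) < 0 :=
        sub_neg.mpr (Real.log_lt_log hγ0 h)
      rw [div_lt_div_right_of_neg hD]
      have hlt : (γ - (1 - α) * (1 - β)) * (1 - γ) < α * (β * γ) := by nlinarith
      have := Real.log_lt_log (mul_pos hX h1γ) hlt
      rw [elog1, elog2] at this
      linarith
    · have hD : (0:ℝ) < Real.log γ - Real.log (1 - α) :=
        sub_pos.mpr (Real.log_lt_log h1α h)
      rw [div_lt_div_iff_of_pos_right hD]
      have hlt : α * (β * γ) < (γ - (1 - α) * (1 - β)) * (1 - γ) := by nlinarith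
      have := Real.log_lt_log (mul_pos hα0 hβγ) hlt
      rw [elog1, elog2] at this
      linarith
  · intro hbg
    rcases lt_or_gt_of_ne hne with h | h
    · have hD : Real.log γ - Real.log (1 - α) < 0 :=
        sub_neg.mpr (Real.log_lt_log hγ0 h)
      rw [div_lt_div_right_of_neg hD]
      have hlt : α * (β * γ) < (γ - (1 - α) * (1 - β)) * (1 - γ) := by nlinarith
      have := Real.log_lt_log (mul_pos hα0 hβγ) hlt
      rw [elog1, elog2] at this
      linarith
    · have hD : (0:ℝ) < Real.log γ - Real.log (1 - α) :=
        sub_pos.mpr (Real.log_lt_log h1α h)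
      rw [div_lt_div_iff_of_pos_right hD]
      have hlt : (γ - (1 - α) * (1 - β)) * (1 - γ) < α * (β * γ) := by nlinarith
      have := Real.log_lt_log (mul_pos hX h1γ) hlt
      rw [elog1, elog2] at this
      linarith
end
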